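/- Let (m, l) be a morphism of state experiment probability systems from (Σ', Q', μ') to (Σ, Q, μ), i.e. m : Σ' → Σ, l : Q → Q' with μ(α, m(p')) = μ'(l(α), p'), l(Π_i α_i) = Π_i l(α_i), and l(α̃) = (l(α))~. Then l preserves the certainty preorder and equivalence on experiments: α ≤ β in Q implies l(α) ≤ l(β) in Q' restricted to states in the image of m, and α ≈ β implies the induced map n : L → L' on equivalence classes (sending the class of α to the class of l(α)) is well-defined, provided the covariance law holds; moreover for all a ∈ L and p' ∈ Σ': a ∈ ξ(m(p')) if and only if n(a) ∈ ξ'(p'). -/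

import Mathlib

open Set

/-- The operation `V ↦ 1 - V` on subsets of `[0,1]`. -/
def oneMinus (V : Set ℝ) : Set ℝ := {x | x ∈ Set.Icc (0:ℝ) 1 ∧ 1 - x ∈ V}

/-- A state experiment probability system (Aerts): states `S`, yes/no-experiments `Q`,
subset probability `mu`, products of arbitrary families, inverse experiments and a unit. -/
structure SEP (S Q : Type) : Type 1 where
  mu : Q → S → Set ℝ
  mu_sub : ∀ α p, mu α p ⊆ Set.Icc (0:ℝ) 1
  prod : {I : Type} → (I → Q) → Q
  mu_prod : ∀ {I : Type} (α : I → Q) (p : S), mu (prod α) p = ⋃ i, mu (α i) p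
  inv : Q → Q
  inv_inv : ∀ α, inv (inv α) = α
  inv_prod : ∀ {I : Type} (α : I → Q), inv (prod α) = prod (fun i => inv (α i))
  mu_inv : ∀ α p, mu (inv α) p = oneMinus (mu α p)
  tau : Q
  mu_tau : ∀ p, mu tau p = ({1} : Set ℝ)

variable {S Q : Type}

/-- `p ≤ q` on states: every experiment certain in `q` is certain in `p`. -/
def stateLe (E : SEP S Q) (p q : S) : Prop :=
  ∀ γ : Q, E.mu γ q ⊆ ({1} : Set ℝ) → E.mu γ p ⊆ ({1} : Set ℝ)

/-- The certainty preorder on experiments. -/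
def certLe (E : SEP S Q) (α β : Q) : Prop :=
  ∀ r : S, E.mu α r ⊆ ({1} : Set ℝ) → E.mu β r ⊆ ({1} : Set ℝ)

/-- The certainty equivalence on experiments, as a setoid. -/
def certSetoid (E : SEP S Q) : Setoid Q where
  r α β := certLe E α β ∧ certLe E β α
  iseqv := ⟨fun _ => ⟨fun _ h => h, fun _ h => h⟩,
    fun h => ⟨h.2, h.1⟩,
    fun h1 h2 => ⟨fun r h => h2.1 r (h1.1 r h), fun r h => h1.2 r (h2.2 r h)⟩⟩

/-- The quotient set `L` of equivalence classes of experiments. -/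
def Lq (E : SEP S Q) := Quotient (certSetoid E)

noncomputable instance (E : SEP S Q) : Preorder (Lq E) where
  le a b := Quotient.liftOn₂ a b (certLe E)
    (fun _ _ _ _ h1 h2 => propext
      ⟨fun h r hr => h2.1 r (h r (h1.2 r hr)), fun h r hr => h2.2 r (h r (h1.1 r hr))⟩)
  le_refl a := by
    induction a using Quotient.ind
    exact fun r h => h
  le_trans a b c := by
    induction a using Quotient.ind
    induction b using Quotient.ind
    induction c using Quotient.ind
    exact fun h1 h2 r h => h2 r (h1 r h)

noncomputable instance (E : SEP S Q) : PartialOrder (Lq E) where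
  le_antisymm a b := by
    induction a using Quotient.ind
    induction b using Quotient.ind
    exact fun h1 h2 => Quotient.sound ⟨h1, h2⟩

/-- The set of properties (equivalence classes of experiments) actual in state `p`. -/
def xi (E : SEP S Q) (p : S) : Set (Lq E) :=
  {a | ∀ α : Q, Quotient.mk (certSetoid E) α = a → E.mu α p ⊆ ({1} : Set ℝ)}

/-! Covariance says that `α` is certain in `m p'` exactly when `l α` is certain in `p'`. Since
certainty in a state is invariant under the certainty equivalence, both the preorder and the
property sets `ξ` can be tested on a single representative, where this equivalence applies. -/

lemma mem_xi_mk_iff (E : SEP S Q) (α : Q) (p : S) :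
    Quotient.mk (certSetoid E) α ∈ xi E p ↔ E.mu α p ⊆ ({1} : Set ℝ) :=
  ⟨fun h => h α rfl, fun h _ hβ => (Quotient.exact hβ).2 p h⟩

section Morphism

variable {S' Q' : Type} {E : SEP S Q} {E' : SEP S' Q'} {m : S' → S} {l : Q → Q'}

lemma certLe_map (hcov : ∀ (α : Q) (p' : S'), E.mu α (m p') = E'.mu (l α) p')
    {α β : Q} (h : certLe E α β) : certLe E' (l α) (l β) := fun p' hα => by
  rw [← hcov] at hα ⊢
  exact h (m p') hα

def Lq.map (hcov : ∀ (α : Q) (p' : S'), E.mu α (m p') = E'.mu (l α) p') : Lq E → Lq E' :=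
  Quotient.map l fun _ _ h => ⟨certLe_map hcov h.1, certLe_map hcov h.2⟩

lemma Lq.mem_xi_iff_map_mem_xi (hcov : ∀ (α : Q) (p' : S'), E.mu α (m p') = E'.mu (l α) p')
    (a : Lq E) (p' : S') : a ∈ xi E (m p') ↔ Lq.map hcov a ∈ xi E' p' := by
  induction a using Quotient.ind with
  | _ α => exact (mem_xi_mk_iff E α (m p')).trans <| hcov α p' ▸ (mem_xi_mk_iff E' (l α) p').symm

end Morphism

theorem sep_morphism_induces_sp_morphism_general
    {S' Q' : Type} (E : SEP S Q) (E' : SEP S' Q')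
    (m : S' → S) (l : Q → Q')
    (hcov : ∀ (α : Q) (p' : S'), E.mu α (m p') = E'.mu (l α) p') :
    -- l preserves the certainty preorder, restricted to states in the image of m
    (∀ α β : Q, certLe E α β →
      ∀ p' : S', E'.mu (l α) p' ⊆ ({1} : Set ℝ) → E'.mu (l β) p' ⊆ ({1} : Set ℝ)) ∧
    -- the induced map n on equivalence classes is well defined and covariant for ξ
    ∃ n : Lq E → Lq E',
      (∀ α : Q, n (Quotient.mk (certSetoid E) α) = Quotient.mk (certSetoid E') (l α)) ∧
      (∀ (a : Lq E) (p' : S'), a ∈ xi E (m p') ↔ n a ∈ xi E' p') :=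
  ⟨fun _ _ h => certLe_map hcov h,
    Lq.map hcov, fun _ => rfl, Lq.mem_xi_iff_map_mem_xi hcov⟩

/-- A morphism of state experiment probability systems preserves the certainty preorder,
induces a well-defined map `n` on the quotient lattices, and satisfies
`a ∈ ξ(m(p')) ↔ n(a) ∈ ξ'(p')`. -/
theorem sep_morphism_induces_sp_morphism
    {S' Q' : Type} (E : SEP S Q) (E' : SEP S' Q')
    (m : S' → S) (l : Q → Q')
    (hcov : ∀ (α : Q) (p' : S'), E.mu α (m p') = E'.mu (l α) p')
    (hprod : ∀ {I : Type} (α : I → Q), l (E.prod α) = E'.prod (fun i => l (α i)))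
    (hinv : ∀ α : Q, l (E.inv α) = E'.inv (l α)) :
    -- l preserves the certainty preorder, restricted to states in the image of m
    (∀ α β : Q, certLe E α β →
      ∀ p' : S', E'.mu (l α) p' ⊆ ({1} : Set ℝ) → E'.mu (l β) p' ⊆ ({1} : Set ℝ)) ∧
    -- the induced map n on equivalence classes is well defined and covariant for ξ
    ∃ n : Lq E → Lq E',
      (∀ α : Q, n (Quotient.mk (certSetoid E) α) = Quotient.mk (certSetoid E') (l α)) ∧
      (∀ (a : Lq E) (p' : S'), a ∈ xi E (m p') ↔ n a ∈ xi E' p') :=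
  sep_morphism_induces_sp_morphism_general E E' m l hcov
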